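/- arXiv:2009.13163 — 4 statements merged into one kernel-verified Lean document; each statement's English description precedes it below -/
import Mathlib

section
/- Let H, D', R, T_g, P_L be real constants with H > 0, D' > 0, T_g > 0, R ≥ 0, P_L ≥ 0, and let f_COI(t) = (P_L/D' + 2·H·R/(T_g·D'^2))·(exp(−D'·t/(2H)) − 1) + (R/(T_g·D'))·t. Then the derivative satisfies f_COI'(t) = R/(T_g·D') − (P_L/(2H) + R/(T_g·D'))·exp(−D'·t/(2H)); in particular f_COI'(0) = −P_L/(2H), and the supremum over t ≥ 0 of |f_COI'(t)| equals max(P_L/(2H), R/(T_g·D')). -/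
/-!
The RoCoF `f_COI' = a - (a + b) e^{-kt}`, with `a = R/(T_g D')`, `b = P_L/(2H)` and `k = D'/(2H)`,
rises monotonically from `-b` at `t = 0` towards `a` as `t → ∞`. So on `t ≥ 0` it stays in
`[-b, a]`, which bounds `|f_COI'|` by `max b a`; the value `b` is attained at `t = 0` and `a` is
approached at infinity, so the bound is the supremum.
-/

open Filter Topology Set

theorem csSup_image_Ici_eq_max {β : Type*} [ConditionallyCompleteLinearOrder β]
    [TopologicalSpace β] [OrderClosedTopology β] {f : ℝ → β} {t₀ : ℝ} {a b : β}
    (hle : ∀ t ≥ t₀, f t ≤ max b a) (h₀ : f t₀ = b) (hlim : Tendsto f atTop (𝓝 a)) :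
    sSup (f '' Ici t₀) = max b a := by
  have hbdd : BddAbove (f '' Ici t₀) := ⟨max b a, forall_mem_image.2 hle⟩
  refine le_antisymm (csSup_le (nonempty_Ici.image f) (forall_mem_image.2 hle)) (max_le ?_ ?_)
  · exact h₀ ▸ le_csSup hbdd (mem_image_of_mem f self_mem_Ici)
  · exact le_of_tendsto hlim <| (eventually_ge_atTop t₀).mono fun t ht =>
      le_csSup hbdd (mem_image_of_mem f ht)

theorem abs_sub_mul_le_max {a b e : ℝ} (ha : 0 ≤ a) (hb : 0 ≤ b) (he₀ : 0 ≤ e)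
    (he₁ : e ≤ 1) :
    |a - (b + a) * e| ≤ max b a := by
  rw [abs_le]
  constructor <;> nlinarith [le_max_left b a, le_max_right b a]

theorem hasDerivAt_exp_decay_add_ramp (H D' R Tg PL t : ℝ) (hH : H ≠ 0) (hD : D' ≠ 0) :
    HasDerivAt (fun t : ℝ =>
      (PL / D' + 2 * H * R / (Tg * D' ^ 2)) * (Real.exp (-D' * t / (2 * H)) - 1)
        + (R / (Tg * D')) * t)
      (R / (Tg * D') - (PL / (2 * H) + R / (Tg * D')) * Real.exp (-D' * t / (2 * H))) t := by
  have hexponent : HasDerivAt (fun t : ℝ => -D' * t / (2 * H)) (-D' / (2 * H)) t := by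
    simpa using ((hasDerivAt_id t).const_mul (-D')).div_const (2 * H)
  refine (((hexponent.exp.sub_const 1).const_mul _).add
    ((hasDerivAt_id t).const_mul _)).congr_deriv ?_
  field_simp
  ring

/-- Derivative of the Centre-Of-Inertia frequency deviation, its initial value
(the initial RoCoF), and the supremum of the absolute RoCoF over `t ≥ 0`. -/
theorem stmt_1 (H D' R Tg PL : ℝ) (hH : 0 < H) (hD : 0 < D') (hTg : 0 < Tg)
    (hR : 0 ≤ R) (hPL : 0 ≤ PL)
    (fCOI : ℝ → ℝ)
    (hf : fCOI = fun t : ℝ =>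
      (PL / D' + 2 * H * R / (Tg * D' ^ 2)) * (Real.exp (-D' * t / (2 * H)) - 1)
        + (R / (Tg * D')) * t) :
    (∀ t : ℝ, deriv fCOI t
        = R / (Tg * D') - (PL / (2 * H) + R / (Tg * D')) * Real.exp (-D' * t / (2 * H)))
    ∧ deriv fCOI 0 = -PL / (2 * H)
    ∧ sSup ((fun t => |deriv fCOI t|) '' Set.Ici (0 : ℝ))
        = max (PL / (2 * H)) (R / (Tg * D')) := by
  have hderiv : ∀ t, deriv fCOI t
      = R / (Tg * D') - (PL / (2 * H) + R / (Tg * D')) * Real.exp (-D' * t / (2 * H)) :=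
    fun t => hf ▸ (hasDerivAt_exp_decay_add_ramp H D' R Tg PL t hH.ne' hD.ne').deriv
  refine ⟨hderiv, by rw [hderiv]; simp; ring, ?_⟩
  have hexp_lim : Tendsto (fun t => Real.exp (-D' * t / (2 * H))) atTop (𝓝 0) :=
    Real.tendsto_exp_comp_nhds_zero.2 <|
      (tendsto_id.const_mul_atTop_of_neg (neg_neg_of_pos hD)).atBot_div_const (by positivity)
  refine csSup_image_Ici_eq_max (fun t ht => ?_) ?_ ?_
  · rw [hderiv]
    exact abs_sub_mul_le_max (by positivity) (by positivity) (Real.exp_nonneg _)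
      (Real.exp_le_one_iff.2 (div_nonpos_of_nonpos_of_nonneg (by nlinarith)
        (by positivity)))
  · rw [hderiv]
    simp only [mul_zero, zero_div, Real.exp_zero, mul_one, sub_add_cancel_right,
      abs_neg]
    exact abs_of_nonneg (by positivity)
  · simp only [hderiv]
    simpa [abs_of_nonneg (by positivity : 0 ≤ R / (Tg * D'))] using
      ((tendsto_const_nhds (x := R / (Tg * D'))).sub
        (hexp_lim.const_mul (PL / (2 * H) + R / (Tg * D')))).abs
end

section
/- Let H, D', R, T_g, P_L be real constants with H > 0, D' > 0, T_g > 0, R ≥ 0, P_L ≥ 0, and additionally R/(T_g·D') ≤ P_L/(2H). Let f_COI(t) = (P_L/D' + 2·H·R/(T_g·D'^2))·(exp(−D'·t/(2H)) − 1) + (R/(T_g·D'))·t, let A ≥ 0, ω, φ be real, and set Δf(t) = f_COI(t) + A·sin(ω·t + φ). Then for all t ≥ 0, |Δf'(t)| ≤ P_L/(2H) + A·|ω|. -/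
/-- Regional RoCoF bound: the frequency deviation modelled as the Centre-Of-Inertia
frequency plus an unattenuated inter-area oscillation has its rate of change bounded by
`P_L/(2H) + A·|ω|` for all `t ≥ 0`, provided `R/(T_g·D') ≤ P_L/(2H)`. -/
theorem stmt_4 (H D' R Tg PL A ω φ : ℝ) (hH : 0 < H) (hD : 0 < D') (hTg : 0 < Tg)
    (hR : 0 ≤ R) (hPL : 0 ≤ PL) (hA : 0 ≤ A)
    (hcond : R / (Tg * D') ≤ PL / (2 * H))
    (Δf : ℝ → ℝ)
    (hf : Δf = fun t : ℝ =>
      ((PL / D' + 2 * H * R / (Tg * D' ^ 2)) * (Real.exp (-D' * t / (2 * H)) - 1)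
          + (R / (Tg * D')) * t)
        + A * Real.sin (ω * t + φ)) :
    ∀ t : ℝ, 0 ≤ t → |deriv Δf t| ≤ PL / (2 * H) + A * |ω| := by
  intro t ht
  set C := PL / D' + 2 * H * R / (Tg * D' ^ 2) with hC
  set b := R / (Tg * D') with hb
  set a := PL / (2 * H) with ha
  have hderiv : HasDerivAt Δf
      (C * (Real.exp (-D' * t / (2 * H)) * (-D' / (2 * H))) + b
        + A * (Real.cos (ω * t + φ) * ω)) t := by
    rw [hf]
    have h1 : HasDerivAt (fun t : ℝ => -D' * t / (2 * H)) (-D' / (2 * H)) t := by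
      simpa using ((hasDerivAt_id t).const_mul (-D')).div_const (2 * H)
    have h2 : HasDerivAt (fun t : ℝ => Real.exp (-D' * t / (2 * H)))
        (Real.exp (-D' * t / (2 * H)) * (-D' / (2 * H))) t := (Real.hasDerivAt_exp _).comp t h1
    have h3 : HasDerivAt (fun t : ℝ => C * (Real.exp (-D' * t / (2 * H)) - 1))
        (C * (Real.exp (-D' * t / (2 * H)) * (-D' / (2 * H)))) t :=
      ((h2.sub_const 1).const_mul C)
    have h4 : HasDerivAt (fun t : ℝ => b * t) b t := by
      simpa using (hasDerivAt_id t).const_mul b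
    have h5 : HasDerivAt (fun t : ℝ => ω * t + φ) ω t := by
      simpa using ((hasDerivAt_id t).const_mul ω).add_const φ
    have h6 : HasDerivAt (fun t : ℝ => A * Real.sin (ω * t + φ))
        (A * (Real.cos (ω * t + φ) * ω)) t :=
      ((Real.hasDerivAt_sin _).comp t h5).const_mul A
    exact (h3.add h4).add h6
  rw [hderiv.deriv]
  have h2H : (0:ℝ) < 2 * H := by linarith
  have hCeq : C * (-D' / (2 * H)) = -(a + b) := by
    rw [hC, ha, hb]
    field_simp
  have hE := Real.exp_nonneg (-D' * t / (2 * H))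
  have hE1 : Real.exp (-D' * t / (2 * H)) ≤ 1 := by
    apply Real.exp_le_one_iff.mpr
    apply div_nonpos_of_nonpos_of_nonneg _ h2H.le
    nlinarith
  set E := Real.exp (-D' * t / (2 * H)) with hEdef
  have ha0 : 0 ≤ a := div_nonneg hPL h2H.le
  have hb0 : 0 ≤ b := div_nonneg hR (by positivity)
  have hfirst : |C * (E * (-D' / (2 * H))) + b| ≤ a := by
    have : C * (E * (-D' / (2 * H))) + b = -(a + b) * E + b := by
      rw [← hCeq]; ring
    rw [this, abs_le]
    constructor <;> nlinarith
  have hsecond : |A * (Real.cos (ω * t + φ) * ω)| ≤ A * |ω| := by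
    rw [abs_mul, abs_mul, abs_of_nonneg hA]
    rw [mul_comm (|Real.cos (ω * t + φ)|), ← mul_assoc]
    exact mul_le_of_le_one_right (mul_nonneg hA (abs_nonneg ω)) (Real.abs_cos_le_one _)
  calc |C * (E * (-D' / (2 * H))) + b + A * (Real.cos (ω * t + φ) * ω)|
      ≤ |C * (E * (-D' / (2 * H))) + b| + |A * (Real.cos (ω * t + φ) * ω)| := abs_add_le _ _
    _ ≤ a + A * |ω| := add_le_add hfirst hsecond
end

section
/- Let H₁ > 0, D₁ ≥ 0, R₁, T_g > 0, T₁₂, Δf_max be real constants, let t* ∈ (0, T_g], and let Δf₁ : [0, ∞) → ℝ be differentiable with Δf₁(0) = 0 and Δf₂ : [0, ∞) → ℝ continuous, such that for all t ∈ [0, t*], 2·H₁·Δf₁'(t) + D₁·Δf₁(t) = (R₁/T_g)·t − T₁₂·(∫₀^t Δf₁(τ) dτ − ∫₀^t Δf₂(τ) dτ). If Δf₁(t*) ≥ −Δf_max, then T₁₂·∫₀^{t*} ∫₀^t (Δf₁(τ) − Δf₂(τ)) dτ dt ≤ 2·H₁·Δf_max + (R₁/T_g)·(t*)²/2 − D₁·∫₀^{t*}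 Δf₁(t) dt. -/
open Set MeasureTheory intervalIntegral

/-- Energy-based nadir condition for region 1 of a two-region system (outage in region 2):
if the frequency of region 1 stays above `−Δf_max` at the nadir time `t*`, then the energy
exported to region 2 is bounded by the admissible kinetic energy plus the contributions
from frequency response and load damping. -/
theorem stmt_7 (H₁ D₁ R₁ Tg T₁₂ Δfmax tstar : ℝ)
    (hH : 0 < H₁) (hD : 0 ≤ D₁) (hTg : 0 < Tg)
    (htstar : tstar ∈ Set.Ioc 0 Tg)
    (Δf₁ Δf₂ : ℝ → ℝ)
    (hdiff : DifferentiableOn ℝ Δf₁ (Set.Ici 0))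
    (hinit : Δf₁ 0 = 0)
    (hcont : ContinuousOn Δf₂ (Set.Ici 0))
    (hode : ∀ t ∈ Set.Icc (0 : ℝ) tstar,
      2 * H₁ * derivWithin Δf₁ (Set.Ici 0) t + D₁ * Δf₁ t
        = (R₁ / Tg) * t
            - T₁₂ * ((∫ τ in (0:ℝ)..t, Δf₁ τ) - ∫ τ in (0:ℝ)..t, Δf₂ τ))
    (hnadir : Δf₁ tstar ≥ -Δfmax) :
    T₁₂ * ∫ t in (0:ℝ)..tstar, (∫ τ in (0:ℝ)..t, (Δf₁ τ - Δf₂ τ))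
      ≤ 2 * H₁ * Δfmax + (R₁ / Tg) * tstar ^ 2 / 2
          - D₁ * ∫ t in (0:ℝ)..tstar, Δf₁ t := by
  obtain ⟨ht0, htTg⟩ := htstar
  have hts : (0:ℝ) ≤ tstar := ht0.le
  have hIcc : Icc (0:ℝ) tstar ⊆ Ici 0 := fun x hx => hx.1
  have hc1 : ContinuousOn Δf₁ (Ici 0) := hdiff.continuousOn
  -- integrability of Δf₁, Δf₂ on subintervals
  have hint1 : ∀ t ∈ Icc (0:ℝ) tstar, IntervalIntegrable Δf₁ volume 0 t := fun t ht =>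
    (hc1.mono (fun x hx => (Set.uIcc_of_le ht.1 ▸ hx : x ∈ Icc 0 t).1)).intervalIntegrable
  have hint2 : ∀ t ∈ Icc (0:ℝ) tstar, IntervalIntegrable Δf₂ volume 0 t := fun t ht =>
    (hcont.mono (fun x hx => (Set.uIcc_of_le ht.1 ▸ hx : x ∈ Icc 0 t).1)).intervalIntegrable
  -- primitives
  set F : ℝ → ℝ := fun t => ∫ τ in (0:ℝ)..t, Δf₁ τ with hF
  set G : ℝ → ℝ := fun t => ∫ τ in (0:ℝ)..t, Δf₂ τ with hG
  have hFc : ContinuousOn F (Icc 0 tstar) := by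
    have := continuousOn_primitive_interval
      (f := Δf₁) (μ := volume) (a := (0:ℝ)) (b := tstar)
      ((hc1.mono (fun x hx => (Set.uIcc_of_le hts ▸ hx : x ∈ Icc 0 tstar).1)).integrableOn_compact
        (by rw [Set.uIcc_of_le hts]; exact isCompact_Icc))
    rwa [Set.uIcc_of_le hts] at this
  have hGc : ContinuousOn G (Icc 0 tstar) := by
    have := continuousOn_primitive_interval
      (f := Δf₂) (μ := volume) (a := (0:ℝ)) (b := tstar)
      ((hcont.mono (fun x hx => (Set.uIcc_of_le hts ▸ hx : x ∈ Icc 0 tstar).1)).integrableOn_compact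
        (by rw [Set.uIcc_of_le hts]; exact isCompact_Icc))
    rwa [Set.uIcc_of_le hts] at this
  -- the derivative function
  set φ : ℝ → ℝ := fun t =>
    ((R₁ / Tg) * t - T₁₂ * (F t - G t) - D₁ * Δf₁ t) / (2 * H₁) with hφ
  have hH2 : (2 * H₁) ≠ 0 := by positivity
  have hode' : ∀ t ∈ Icc (0:ℝ) tstar, derivWithin Δf₁ (Ici 0) t = φ t := by
    intro t ht
    have h := hode t ht
    have e : (∫ τ in (0:ℝ)..t, Δf₁ τ) - ∫ τ in (0:ℝ)..t, Δf₂ τ = F t - G t := rfl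
    rw [e] at h
    rw [hφ]
    dsimp only
    rw [eq_div_iff hH2]
    linarith
  have hφc : ContinuousOn φ (Icc 0 tstar) :=
    (((continuousOn_const.mul continuousOn_id).sub
      (continuousOn_const.mul (hFc.sub hGc))).sub
      (continuousOn_const.mul (hc1.mono hIcc))).div_const _
  have hφint : IntervalIntegrable φ volume 0 tstar :=
    (hφc.mono (by rw [Set.uIcc_of_le hts])).intervalIntegrable
  -- FTC : ∫ φ = Δf₁ tstar
  have hFTC : ∫ t in (0:ℝ)..tstar, φ t = Δf₁ tstar := by
    have := intervalIntegral.integral_eq_sub_of_hasDeriv_right_of_le hts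
      (hc1.mono hIcc)
      (fun x hx => by
        have hx' : Ici (0:ℝ) ∈ nhds x := Ici_mem_nhds hx.1
        have hd : HasDerivAt Δf₁ (derivWithin Δf₁ (Ici 0) x) x :=
          ((hdiff x (le_of_lt hx.1)).hasDerivWithinAt).hasDerivAt hx'
        rw [hode' x ⟨hx.1.le, hx.2.le⟩] at hd
        exact hd.hasDerivWithinAt)
      hφint
    rw [this, hinit, sub_zero]
  -- compute ∫ φ by linearity
  have hintF : IntervalIntegrable (fun t => F t - G t) volume 0 tstar :=
    ((hFc.sub hGc).mono (by rw [Set.uIcc_of_le hts])).intervalIntegrable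
  have hintf : IntervalIntegrable Δf₁ volume 0 tstar := hint1 tstar ⟨hts, le_rfl⟩
  have hintt : IntervalIntegrable (fun t => (R₁ / Tg) * t) volume 0 tstar :=
    (continuous_const.mul continuous_id).intervalIntegrable _ _
  have hsplit : ∫ t in (0:ℝ)..tstar, φ t
      = ((R₁ / Tg) * tstar ^ 2 / 2
          - T₁₂ * (∫ t in (0:ℝ)..tstar, (F t - G t))
          - D₁ * (∫ t in (0:ℝ)..tstar, Δf₁ t)) / (2 * H₁) := by
    simp only [hφ]
    rw [intervalIntegral.integral_div, intervalIntegral.integral_sub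
        (hintt.sub (hintF.const_mul T₁₂)) (hintf.const_mul D₁),
      intervalIntegral.integral_sub hintt (hintF.const_mul T₁₂),
      intervalIntegral.integral_const_mul, intervalIntegral.integral_const_mul,
      intervalIntegral.integral_const_mul]
    simp [integral_id, mul_div_assoc]
  -- rewrite goal integrand
  have hgoal : ∫ t in (0:ℝ)..tstar, (∫ τ in (0:ℝ)..t, (Δf₁ τ - Δf₂ τ))
      = ∫ t in (0:ℝ)..tstar, (F t - G t) := by
    apply intervalIntegral.integral_congr
    intro t ht
    rw [Set.uIcc_of_le hts] at ht
    exact intervalIntegral.integral_sub (hint1 t ht) (hint2 t ht)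
  rw [hgoal]
  have key : 2 * H₁ * Δf₁ tstar
      = (R₁ / Tg) * tstar ^ 2 / 2
          - T₁₂ * (∫ t in (0:ℝ)..tstar, (F t - G t))
          - D₁ * (∫ t in (0:ℝ)..tstar, Δf₁ t) := by
    have h := hsplit
    rw [hFTC, eq_comm, div_eq_iff hH2] at h
    linarith
  have hm : 2 * H₁ * (-Δfmax) ≤ 2 * H₁ * Δf₁ tstar :=
    mul_le_mul_of_nonneg_left hnadir (by positivity)
  linarith
end

section
/- Let H₁, H₂, D₁', D₂', R₁, R₂, P_L be real, T ≠ 0, T_g ≠ 0, D' := D₁'+D₂' ≠ 0, H := H₁+H₂, R := R₁+R₂, and define F₁(s) = (−2·H₂·P_L·s³ + (2·H₂·R₁/T_g − D₂'·P_L)·s² + (D₂'·R₁/T_g − P_L·T)·s + R·T/T_g) / (4·H₁·H₂·s⁵ + 2·(D₁'·H₂ + D₂'·H₁)·s⁴ + (2·H·T + D₁'·D₂')·s³ + D'·T·s²). Then the limit as s → 0 (s ≠ 0) of s·(F₁(s) − R/(D'·T_g·s²)) equals −(2·H·R + D'·T_g·P_L − D₂'·(R₁·D₂' − R₂·D₁')/T)/((D')²·T_g).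 -/
open Filter Topology

/- Writing `F₁(s) = f(s)/s²` with `f = N/Q` (numerator over the cubic cofactor of `s²` in the
denominator), the constant `R/(D'·T_g)` is `f(0)`, so `s·(F₁(s) − f(0)/s²)` is the difference
quotient of `f` at `0`, and the limit is the quotient-rule value `f'(0)`. -/

theorem tendsto_mul_sub_div_sq_of_hasDerivAt {𝕜 : Type*} [NontriviallyNormedField 𝕜]
    {f : 𝕜 → 𝕜} {f' : 𝕜} (hf : HasDerivAt f f' 0) :
    Tendsto (fun s => s * (f s / s ^ 2 - f 0 / s ^ 2)) (𝓝[≠] 0) (𝓝 f') := by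
  refine (hasDerivAt_iff_tendsto_slope.mp hf).congr' ?_
  filter_upwards [self_mem_nhdsWithin] with s (hs : s ≠ 0)
  rw [slope_def_field]
  field_simp
  ring

theorem hasDerivAt_cubic_zero {𝕜 : Type*} [NontriviallyNormedField 𝕜] (a b c d : 𝕜) :
    HasDerivAt (fun s => a * s ^ 3 + b * s ^ 2 + c * s + d) c 0 := by
  have h := (((hasDerivAt_pow 3 (0 : 𝕜)).const_mul a).add
    ((hasDerivAt_pow 2 (0 : 𝕜)).const_mul b)).add ((hasDerivAt_id (0 : 𝕜)).const_mul c)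
    |>.add_const d
  simpa using h

/-- The coefficient of the `1/s` term of `F₁(s)`: the limit as `s → 0` (`s ≠ 0`) of
`s·(F₁(s) − R/(D'·T_g·s²))` equals
`−(2HR + D'·T_g·P_L − D₂'·(R₁D₂' − R₂D₁')/T)/((D')²·T_g)`. -/
theorem stmt_13 (H₁ H₂ D₁ D₂ R₁ R₂ PL T Tg : ℝ)
    (hT : T ≠ 0) (hTg : Tg ≠ 0) (hD : D₁ + D₂ ≠ 0) :
    Filter.Tendsto
      (fun s : ℝ => s *
        ((-2 * H₂ * PL * s ^ 3 + (2 * H₂ * R₁ / Tg - D₂ * PL) * s ^ 2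
            + (D₂ * R₁ / Tg - PL * T) * s + (R₁ + R₂) * T / Tg)
          / (4 * H₁ * H₂ * s ^ 5 + 2 * (D₁ * H₂ + D₂ * H₁) * s ^ 4
            + (2 * (H₁ + H₂) * T + D₁ * D₂) * s ^ 3 + (D₁ + D₂) * T * s ^ 2)
          - (R₁ + R₂) / ((D₁ + D₂) * Tg * s ^ 2)))
      (nhdsWithin 0 {s : ℝ | s ≠ 0})
      (nhds (-(2 * (H₁ + H₂) * (R₁ + R₂) + (D₁ + D₂) * Tg * PL
          - D₂ * (R₁ * D₂ - R₂ * D₁) / T) / ((D₁ + D₂) ^ 2 * Tg))) := by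
  have hderiv := (hasDerivAt_cubic_zero (-2 * H₂ * PL) (2 * H₂ * R₁ / Tg - D₂ * PL)
    (D₂ * R₁ / Tg - PL * T) ((R₁ + R₂) * T / Tg)).div
    (hasDerivAt_cubic_zero (4 * H₁ * H₂) (2 * (D₁ * H₂ + D₂ * H₁))
      (2 * (H₁ + H₂) * T + D₁ * D₂) ((D₁ + D₂) * T)) (by simpa using mul_ne_zero hD hT)
  simp only [zero_pow two_ne_zero, zero_pow three_ne_zero, mul_zero, zero_add] at hderiv
  convert tendsto_mul_sub_div_sq_of_hasDerivAt hderiv using 2 with s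
  · simp only [Pi.div_apply, zero_pow two_ne_zero, zero_pow three_ne_zero, mul_zero, zero_add]
    field_simp
  · rfl
  · field_simp
    ring
end
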